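/- For words w₀, w₁ : List Bool, w₁ is reachable from w₀ if and only if: w₀ and w₁ have the same length, the same total number of `true` entries, and for every m, the number of `true` entries among the first m entries of w₁ is at most the number of `true` entries among the first m entries of w₀. -/

import Mathlib

/-- A single pawn move: a pawn (`true`) advances one square rightward into an
empty square (`false`). -/
def PawnMove (w₀ w₁ : List Bool) : Prop :=
  ∃ u v : List Bool, w₀ = u ++ [true, false] ++ v ∧ w₁ = u ++ [false, true] ++ v

/-- Reachability: the reflexive-transitive closure of the single-move relation. -/
def Reach : List Bool → List Bool → Prop :=
  Relation.ReflTransGen PawnMove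

/-- The `ZMod 2` pairing `⟨w₀|w₁⟩`: `1` if `w₁` is reachable from `w₀`, else `0`. -/
noncomputable def pairing (w₀ w₁ : List Bool) : ZMod 2 :=
  open Classical in if Reach w₀ w₁ then 1 else 0

/-!
Every move keeps the length and the number of pawns and can only lower prefix pawn counts, so
reachability implies the count conditions. Conversely, induct on `w₁`: if `w₁` starts with a pawn
so does `w₀`, and we recurse on the tails; if `w₁` starts with an empty square, shift the leading
block of pawns of `w₀` one square to the right, which brings an empty square to the front without
breaking the prefix conditions for the tails.
-/

open List

variable {u v w : List Bool}

theorem exists_eq_replicate_true_append_false_cons {l : List Bool} (h : false ∈ l) :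
    ∃ k r, l = replicate k true ++ false :: r := by
  induction l with
  | nil => simp at h
  | cons b l ih =>
    cases b with
    | false => exact ⟨0, l, rfl⟩
    | true =>
      obtain ⟨k, r, rfl⟩ := ih (by simpa using h)
      exact ⟨k + 1, r, rfl⟩

def Dominates (w₀ w₁ : List Bool) : Prop :=
  w₀.length = w₁.length ∧ w₀.count true = w₁.count true ∧
    ∀ m : ℕ, (w₁.take m).count true ≤ (w₀.take m).count true

namespace Dominates

theorem refl (u : List Bool) : Dominates u u :=
  ⟨rfl, rfl, fun _ => le_rfl⟩

theorem trans (huv : Dominates u v) (hvw : Dominates v w) : Dominates u w :=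
  ⟨huv.1.trans hvw.1, huv.2.1.trans hvw.2.1, fun m => (hvw.2.2 m).trans (huv.2.2 m)⟩

theorem append_left (p : List Bool) (h : Dominates u v) : Dominates (p ++ u) (p ++ v) := by
  obtain ⟨hlen, hcount, hpre⟩ := h
  refine ⟨by simp [hlen], by simp [hcount], fun m => ?_⟩
  simp only [take_append, count_append]
  exact Nat.add_le_add_left (hpre _) _

theorem append_right (s : List Bool) (h : Dominates u v) : Dominates (u ++ s) (v ++ s) := by
  obtain ⟨hlen, hcount, hpre⟩ := h
  refine ⟨by simp [hlen], by simp [hcount], fun m => ?_⟩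
  simp only [take_append, count_append, hlen]
  exact Nat.add_le_add_right (hpre _) _

theorem true_false : Dominates [true, false] [false, true] := by
  refine ⟨rfl, rfl, fun m => ?_⟩
  rcases m with _ | _ | _ <;> simp

theorem of_cons {b : Bool} (h : Dominates (b :: u) (b :: v)) : Dominates u v := by
  obtain ⟨hlen, hcount, hpre⟩ := h
  refine ⟨by simpa using hlen, by simpa [count_cons] using hcount, fun m => ?_⟩
  simpa [count_cons] using hpre (m + 1)

theorem exists_eq_true_cons (h : Dominates u (true :: v)) : ∃ u', u = true :: u' := by
  obtain ⟨hlen, -, hpre⟩ := h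
  match u, hlen, hpre 1 with
  | true :: u', _, _ => exact ⟨u', rfl⟩
  | false :: _, _, h1 => simp at h1
  | [], hlen, _ => simp at hlen

theorem false_mem (h : Dominates u (false :: v)) : false ∈ u := by
  obtain ⟨hlen, hcount, -⟩ := h
  by_contra hf
  have hall : u.count true = u.length :=
    count_eq_length.mpr fun b hb => by cases b <;> simp_all
  have := count_le_length (a := true) (l := v)
  simp only [length_cons, ne_eq, Bool.false_eq_true, not_false_eq_true, count_cons_of_ne]
    at hlen hcount
  omega

theorem replicate_true_append_false_cons {k : ℕ} {r : List Bool}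
    (h : Dominates (replicate k true ++ false :: r) (false :: v)) :
    Dominates (replicate k true ++ r) v := by
  obtain ⟨hlen, hcount, hpre⟩ := h
  refine ⟨by simp only [length_append, length_replicate, length_cons] at hlen ⊢; omega, by simpa [count_replicate] using hcount, fun m => ?_⟩
  rcases le_or_gt m k with hm | hm
  · rw [take_append_of_le_length (by simpa using hm), take_replicate, min_eq_left hm,
      count_replicate_self]
    exact count_le_length.trans (length_take_le m v)
  · obtain ⟨j, rfl⟩ : ∃ j, m = k + (j + 1) := ⟨m - k - 1, by omega⟩
    have hpre' := hpre (k + (j + 1) + 1)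
    rw [take_succ_cons] at hpre'
    simpa [take_append, count_replicate, Nat.add_assoc] using hpre'

end Dominates

theorem PawnMove.dominates (h : PawnMove u v) : Dominates u v := by
  obtain ⟨p, s, rfl, rfl⟩ := h
  exact (Dominates.true_false.append_left p).append_right s

theorem Reach.dominates (h : Reach u v) : Dominates u v := by
  induction h with
  | refl => exact .refl u
  | tail _ hmove ih => exact ih.trans hmove.dominates

theorem PawnMove.append_left (p : List Bool) (h : PawnMove u v) : PawnMove (p ++ u) (p ++ v) := by
  obtain ⟨x, y, rfl, rfl⟩ := h
  exact ⟨p ++ x, y, by simp, by simp⟩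

theorem Reach.append_left (p : List Bool) (h : Reach u v) : Reach (p ++ u) (p ++ v) :=
  Relation.ReflTransGen.lift (p ++ ·) (fun _ _ => PawnMove.append_left p) _ _ h

theorem reach_replicate_true_append_false_cons (k : ℕ) (r : List Bool) :
    Reach (replicate k true ++ false :: r) (false :: (replicate k true ++ r)) := by
  induction k with
  | zero => exact .refl
  | succ k ih =>
    exact (ih.append_left [true]).tail ⟨[], replicate k true ++ r, rfl, rfl⟩

theorem Dominates.reach (h : Dominates u v) : Reach u v := by
  induction v generalizing u with
  | nil =>
    obtain rfl : u = [] := length_eq_zero_iff.mp h.1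
    exact .refl
  | cons c v ih =>
    cases c with
    | true =>
      obtain ⟨u', rfl⟩ := h.exists_eq_true_cons
      exact (ih h.of_cons).append_left [true]
    | false =>
      obtain ⟨k, r, rfl⟩ := exists_eq_replicate_true_append_false_cons h.false_mem
      exact (reach_replicate_true_append_false_cons k r).trans
        ((ih h.replicate_true_append_false_cons).append_left [false])

theorem reach_iff_counts (w₀ w₁ : List Bool) :
    Reach w₀ w₁ ↔
      w₀.length = w₁.length ∧
      w₀.count true = w₁.count true ∧
      ∀ m : ℕ, (w₁.take m).count true ≤ (w₀.take m).count true :=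
  ⟨Reach.dominates, Dominates.reach⟩
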